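/- Let C = D₀ ∧ … ∧ D_{m−1} be a CNF over Boolean variables x₁, …, x_n, where each clause D_j is a set of literals (i, α) ∈ {1,…,n} × {0,1}, and set S_{i,α} = {j ∈ [m] : (i, α) ∈ D_j}. Let G be the transition graph built from the sets S_{i,α} as described. Then F(G) = { ⋃_{i=1}^{n} S_{i,α(i)} : α a function from {1,…,n} to {0,1} }; consequently, C is satisfiable (some assignment α makes every clause contain a true literal) if and only if the full set [m] = {0,…,m−1} belongs to F(G). -/

import Mathlib

structure TransitionGraph (V E U : Type*) where
  src : E → V
  tgt : E → V
  s : V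
  t : V
  lab : E → Option U

namespace TransitionGraph

variable {V E U : Type*}

def IsSTPath (G : TransitionGraph V E U) (P : List E) : Prop :=
  List.Chain' (fun e f => G.tgt e = G.src f) P ∧
    ((P = [] ∧ G.s = G.t) ∨
      ∃ h : P ≠ [], G.src (P.head h) = G.s ∧ G.tgt (P.getLast h) = G.t)

def labelSet [DecidableEq U] (G : TransitionGraph V E U) (P : List E) : Finset U :=
  (P.filterMap G.lab).toFinset

def labelFamily [DecidableEq U] (G : TransitionGraph V E U) : Set (Finset U) :=
  {S | ∃ P : List E, G.IsSTPath P ∧ G.labelSet P = S}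

end TransitionGraph

/-- The `ε`-separability property for a family of finite sets. -/
def SepProperty {α : Type*} [DecidableEq α] (ε : ℝ) (F : Set (Finset α)) : Prop :=
  ∀ S₁ ∈ F, ∀ S₂ ∈ F, S₁ ≠ S₂ →
    (6 : ℝ) ≤ ε * (max S₁.card S₂.card : ℕ) →
    ε * (max S₁.card S₂.card : ℕ) < ((symmDiff S₁ S₂).card : ℝ)


/-- `S_{i,α}`: the set of (indices of) clauses containing the literal `x_i^α`. -/
def clauseSets {n m : ℕ} (D : Fin m → Finset (Fin n × Bool)) (i : Fin n) (α : Bool) :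
    Finset (Fin m) :=
  Finset.univ.filter (fun j => (i, α) ∈ D j)

/-- The number of edges on the path `P_{i,α}` (a single unlabeled edge if `S_{i,α} = ∅`). -/
def pathLen {n m : ℕ} (D : Fin m → Finset (Fin n × Bool)) (i : Fin n) (α : Bool) : ℕ :=
  max (clauseSets D i α).card 1

/-- Vertices of the transition graph built from the sets `S_{i,α}`:
the main vertices `x₀, …, x_n` together with the inner vertices of the paths `P_{i,α}`. -/
def CnfVert (n m : ℕ) (D : Fin m → Finset (Fin n × Bool)) : Type :=
  Fin (n + 1) ⊕ (Σ i : Fin n, Σ α : Bool, Fin (pathLen D i α - 1))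

/-- Edges of the transition graph: for each `i` and `α`, the consecutive edges of the
path `P_{i,α}` from `x_{i-1}` to `x_i`. -/
def CnfEdge (n m : ℕ) (D : Fin m → Finset (Fin n × Bool)) : Type :=
  Σ i : Fin n, Σ α : Bool, Fin (pathLen D i α)

/-- The transition graph built from the sets `S_{i,α}`, with `s = x₀`, `t = x_n`,
where the edges of `P_{i,α}` are bijectively labeled by the elements of `S_{i,α}`
(a single unlabeled edge if `S_{i,α} = ∅`). -/
def cnfGraph (n m : ℕ) (D : Fin m → Finset (Fin n × Bool)) :
    TransitionGraph (CnfVert n m D) (CnfEdge n m D) (Fin m) where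
  src := fun e =>
    if _ : (e.2.2 : ℕ) = 0 then Sum.inl e.1.castSucc
    else Sum.inr ⟨e.1, e.2.1, ⟨(e.2.2 : ℕ) - 1, by have := e.2.2.isLt; omega⟩⟩
  tgt := fun e =>
    if _ : (e.2.2 : ℕ) = pathLen D e.1 e.2.1 - 1 then Sum.inl e.1.succ
    else Sum.inr ⟨e.1, e.2.1, ⟨(e.2.2 : ℕ), by have := e.2.2.isLt; omega⟩⟩
  s := Sum.inl 0
  t := Sum.inl (Fin.last n)
  lab := fun e => ((clauseSets D e.1 e.2.1).sort (· ≤ ·))[(e.2.2 : ℕ)]?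


/-!
Apart from `x₀, …, x_n`, every vertex of the graph has a single outgoing edge, which continues
the path `P_{i,α}` it lies on. Hence a path from `x_v` to `x_n` (for `v < n`) is some `P_{v,α}`
followed by a path from `x_{v+1}`, and a path from `x_n` to itself is empty. By reverse induction
on `v`, the label sets of `(x_v, x_n)`-paths are exactly the unions `⋃_{i ≥ v} S_{i,β(i)}` over
assignments `β`. For `v = 0` this describes `F(G)`, and such a union is all of `[m]` iff every
clause contains a literal made true by `β`.
-/

namespace TransitionGraph

variable {V E U : Type*} (G : TransitionGraph V E U)

def IsPath : V → V → List E → Prop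
  | u, v, [] => u = v
  | u, v, e :: P => G.src e = u ∧ IsPath (G.tgt e) v P

theorem isPath_nil {u v : V} : G.IsPath u v [] ↔ u = v := Iff.rfl

theorem isPath_cons {u v : V} {e : E} {P : List E} :
    G.IsPath u v (e :: P) ↔ G.src e = u ∧ G.IsPath (G.tgt e) v P := Iff.rfl

theorem isPath_iff_chain {u v : V} {P : List E} :
    G.IsPath u v P ↔ List.IsChain (fun e f => G.tgt e = G.src f) P ∧
      ((P = [] ∧ u = v) ∨ ∃ h : P ≠ [], G.src (P.head h) = u ∧ G.tgt (P.getLast h) = v) := by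
  induction P generalizing u with
  | nil => simp [IsPath]
  | cons e P ih =>
    cases P with
    | nil => simp [IsPath]
    | cons f P =>
      rw [IsPath, ih]
      simp [List.isChain_cons_cons, eq_comm, and_assoc, and_left_comm]

theorem isSTPath_iff_isPath {P : List E} : G.IsSTPath P ↔ G.IsPath G.s G.t P :=
  G.isPath_iff_chain.symm

variable [DecidableEq U]

theorem labelSet_append (P Q : List E) : G.labelSet (P ++ Q) = G.labelSet P ∪ G.labelSet Q := by
  simp [labelSet, List.filterMap_append]

end TransitionGraph

section

variable {n m : ℕ} (D : Fin m → Finset (Fin n × Bool))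

theorem biUnion_clauseSets_eq_univ_iff (β : Fin n → Bool) :
    Finset.univ.biUnion (fun i => clauseSets D i (β i)) = Finset.univ ↔
      ∀ j, ∃ l ∈ D j, β l.1 = l.2 := by
  simp only [Finset.eq_univ_iff_forall, Finset.mem_biUnion, Finset.mem_univ, true_and, clauseSets,
    Finset.mem_filter]
  refine forall_congr' fun j => ⟨fun ⟨i, hi⟩ => ⟨_, hi, rfl⟩, ?_⟩
  rintro ⟨⟨i, α⟩, hl, h⟩
  exact ⟨i, (h : β i = α) ▸ hl⟩

/-- The label set of the `(x_v, x_n)`-path that runs through `P_{i, β i}` for every `i ≥ v`. -/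
def satisfiedFrom (β : Fin n → Bool) (v : Fin (n + 1)) : Finset (Fin m) :=
  (Finset.univ.filter fun i : Fin n => v ≤ i.castSucc).biUnion fun i => clauseSets D i (β i)

variable {D}

theorem satisfiedFrom_zero (β : Fin n → Bool) :
    satisfiedFrom D β 0 = Finset.univ.biUnion fun i => clauseSets D i (β i) := by
  simp [satisfiedFrom]

theorem satisfiedFrom_last (β : Fin n → Bool) : satisfiedFrom D β (Fin.last n) = ∅ := by
  simp [satisfiedFrom]

theorem satisfiedFrom_castSucc (β : Fin n → Bool) (i : Fin n) :
    satisfiedFrom D β i.castSucc = clauseSets D i (β i) ∪ satisfiedFrom D β i.succ := by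
  have : Finset.univ.filter (fun j : Fin n => i.castSucc ≤ j.castSucc) =
      insert i (Finset.univ.filter fun j : Fin n => i.succ ≤ j.castSucc) := by
    ext j
    simp only [Finset.mem_filter, Finset.mem_univ, true_and, Finset.mem_insert,
      Fin.castSucc_le_castSucc_iff, Fin.succ_le_castSucc_iff]
    exact le_iff_eq_or_lt.trans (or_congr_left eq_comm)
  rw [satisfiedFrom, this, Finset.biUnion_insert]
  rfl

theorem satisfiedFrom_update_succ (β : Fin n → Bool) (i : Fin n) (α : Bool) :
    satisfiedFrom D (Function.update β i α) i.succ = satisfiedFrom D β i.succ := by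
  refine Finset.biUnion_congr rfl fun j hj => ?_
  rw [Function.update_of_ne]
  simp only [Finset.mem_filter, Finset.mem_univ, true_and, Fin.succ_le_castSucc_iff] at hj
  exact hj.ne'

end

namespace cnfGraph

open TransitionGraph

variable {n m : ℕ} (D : Fin m → Finset (Fin n × Bool))

-- Named constructors, typed as `CnfVert` and `CnfEdge`: the bare `Sum.inl v` or `⟨i, α, k⟩`
-- elaborates at the unfolded `Sum`/`Sigma` type, and `rw` then fails to match it.
def mainVertex (v : Fin (n + 1)) : CnfVert n m D := Sum.inl v

def innerVertex (i : Fin n) (α : Bool) (k : Fin (pathLen D i α - 1)) : CnfVert n m D :=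
  Sum.inr ⟨i, α, k⟩

def edge (i : Fin n) (α : Bool) (k : Fin (pathLen D i α)) : CnfEdge n m D := ⟨i, α, k⟩

def pathEdges (i : Fin n) (α : Bool) : List (CnfEdge n m D) :=
  (List.finRange (pathLen D i α)).map (edge D i α)

variable {D}

theorem exists_eq_edge (e : CnfEdge n m D) : ∃ i α k, e = edge D i α k :=
  ⟨e.1, e.2.1, e.2.2, rfl⟩

theorem mainVertex_injective : Function.Injective (mainVertex D) :=
  Sum.inl_injective

theorem mainVertex_ne_innerVertex {v : Fin (n + 1)} {i : Fin n} {α : Bool}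
    {k : Fin (pathLen D i α - 1)} : mainVertex D v ≠ innerVertex D i α k :=
  Sum.inl_ne_inr

theorem edge_injective {i i' : Fin n} {α α' : Bool} {k : Fin (pathLen D i α)}
    {k' : Fin (pathLen D i' α')} (h : edge D i α k = edge D i' α' k') :
    i = i' ∧ α = α' ∧ (k : ℕ) = k' := by
  cases h
  simp

theorem src_edge_zero (i : Fin n) (α : Bool) (h : 0 < pathLen D i α) :
    (cnfGraph n m D).src (edge D i α ⟨0, h⟩) = mainVertex D i.castSucc := rfl

theorem src_edge_succ (i : Fin n) (α : Bool) (k : ℕ) (h : k + 1 < pathLen D i α) :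
    (cnfGraph n m D).src (edge D i α ⟨k + 1, h⟩) = innerVertex D i α ⟨k, by omega⟩ := rfl

theorem tgt_edge_of_eq (i : Fin n) (α : Bool) (k : ℕ) (hk : k < pathLen D i α)
    (he : k = pathLen D i α - 1) :
    (cnfGraph n m D).tgt (edge D i α ⟨k, hk⟩) = mainVertex D i.succ := dif_pos he

theorem tgt_edge_of_ne (i : Fin n) (α : Bool) (k : ℕ) (hk : k < pathLen D i α)
    (he : k ≠ pathLen D i α - 1) :
    (cnfGraph n m D).tgt (edge D i α ⟨k, hk⟩) = innerVertex D i α ⟨k, by omega⟩ := dif_neg he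

theorem src_eq_innerVertex_iff {e : CnfEdge n m D} {i : Fin n} {α : Bool}
    {k : Fin (pathLen D i α - 1)} :
    (cnfGraph n m D).src e = innerVertex D i α k ↔ e = edge D i α ⟨k + 1, by omega⟩ := by
  obtain ⟨i', α', ⟨_ | k', hk'⟩⟩ := e
  · refine iff_of_false mainVertex_ne_innerVertex fun h => ?_
    simpa using (edge_injective h).2.2
  · change innerVertex D i' α' _ = _ ↔ edge D i' α' _ = _
    constructor
    · intro h
      obtain ⟨rfl, h⟩ := Sigma.mk.inj_iff.1 (Sum.inr_injective h)
      obtain ⟨rfl, h⟩ := Sigma.mk.inj_iff.1 (eq_of_heq h)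
      cases eq_of_heq h
      rfl
    · intro h
      obtain ⟨rfl, rfl, hk⟩ := edge_injective h
      obtain rfl : k' = k := Nat.succ_injective hk
      rfl

theorem pathLen_pos (i : Fin n) (α : Bool) : 0 < pathLen D i α :=
  lt_max_of_lt_right one_pos

theorem length_pathEdges (i : Fin n) (α : Bool) : (pathEdges D i α).length = pathLen D i α := by
  simp [pathEdges]

theorem drop_pathEdges {i : Fin n} {α : Bool} {k : ℕ} (hk : k < pathLen D i α) :
    (pathEdges D i α).drop k = edge D i α ⟨k, hk⟩ :: (pathEdges D i α).drop (k + 1) := by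
  rw [List.drop_eq_getElem_cons (by simpa [length_pathEdges] using hk)]
  simp [pathEdges]

theorem pathEdges_eq_cons (i : Fin n) (α : Bool) :
    pathEdges D i α = edge D i α ⟨0, pathLen_pos i α⟩ :: (pathEdges D i α).drop 1 :=
  drop_pathEdges (pathLen_pos i α)

theorem pathEdges_ne_nil (i : Fin n) (α : Bool) : pathEdges D i α ≠ [] := by
  rw [pathEdges_eq_cons]
  exact List.cons_ne_nil _ _

theorem cons_eq_pathEdges_append_iff {e : CnfEdge n m D} {P Q : List (CnfEdge n m D)} {i : Fin n}
    {α : Bool} : e :: P = pathEdges D i α ++ Q ↔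
      e = edge D i α ⟨0, pathLen_pos i α⟩ ∧ P = (pathEdges D i α).drop 1 ++ Q := by
  rw [← List.cons_eq_cons, ← List.cons_append, ← pathEdges_eq_cons]

theorem labelSet_pathEdges (i : Fin n) (α : Bool) :
    (cnfGraph n m D).labelSet (pathEdges D i α) = clauseSets D i α := by
  ext x
  simp only [labelSet, pathEdges, List.filterMap_map, List.mem_toFinset, List.mem_filterMap,
    List.mem_finRange, true_and, Function.comp_def]
  change (∃ k : Fin _, ((clauseSets D i α).sort (· ≤ ·))[(k : ℕ)]? = some x) ↔ _
  rw [← Finset.mem_sort (· ≤ ·), List.mem_iff_getElem?]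
  refine ⟨fun ⟨k, hk⟩ => ⟨k, hk⟩, fun ⟨k, hk⟩ => ⟨⟨k, ?_⟩, hk⟩⟩
  have := (List.getElem?_eq_some_iff.1 hk).1
  rw [Finset.length_sort] at this
  exact this.trans_le (le_max_left _ _)

theorem isPath_tgt_edge_iff {i : Fin n} {α : Bool} {k : ℕ} (hk : k < pathLen D i α)
    {v : Fin (n + 1)} {P : List (CnfEdge n m D)} :
    (cnfGraph n m D).IsPath ((cnfGraph n m D).tgt (edge D i α ⟨k, hk⟩)) (mainVertex D v) P ↔
      ∃ Q, P = (pathEdges D i α).drop (k + 1) ++ Q ∧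
        (cnfGraph n m D).IsPath (mainVertex D i.succ) (mainVertex D v) Q := by
  induction hd : pathLen D i α - (k + 1) generalizing k P with
  | zero =>
    rw [tgt_edge_of_eq _ _ _ hk (by omega),
      List.drop_eq_nil_of_le (by rw [length_pathEdges]; omega)]
    simp
  | succ d ih =>
    rw [tgt_edge_of_ne _ _ _ hk (by omega), drop_pathEdges (k := k + 1) (by omega)]
    cases P with
    | nil => simpa [isPath_nil] using mainVertex_ne_innerVertex.symm
    | cons f P =>
      rw [isPath_cons, src_eq_innerVertex_iff]
      constructor
      · rintro ⟨rfl, hP⟩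
        obtain ⟨Q, rfl, hQ⟩ := (ih (k := k + 1) _ (by omega)).1 hP
        exact ⟨Q, rfl, hQ⟩
      · rintro ⟨Q, h, hQ⟩
        obtain ⟨rfl, rfl⟩ := List.cons_eq_cons.1 h
        exact ⟨rfl, (ih (k := k + 1) _ (by omega)).2 ⟨Q, rfl, hQ⟩⟩

theorem isPath_mainVertex_iff {u v : Fin (n + 1)} {P : List (CnfEdge n m D)} :
    (cnfGraph n m D).IsPath (mainVertex D u) (mainVertex D v) P ↔
      (P = [] ∧ u = v) ∨ ∃ i α Q, i.castSucc = u ∧ P = pathEdges D i α ++ Q ∧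
        (cnfGraph n m D).IsPath (mainVertex D i.succ) (mainVertex D v) Q := by
  cases P with
  | nil =>
    simp [isPath_nil, mainVertex_injective.eq_iff, pathEdges_ne_nil]
  | cons e P =>
    rw [isPath_cons]
    simp only [cons_eq_pathEdges_append_iff, List.cons_ne_nil, false_and, false_or]
    obtain ⟨i, α, ⟨_ | k, hk⟩, rfl⟩ := exists_eq_edge e
    · rw [src_edge_zero, mainVertex_injective.eq_iff, isPath_tgt_edge_iff]
      constructor
      · rintro ⟨rfl, Q, rfl, hQ⟩
        exact ⟨i, α, Q, rfl, ⟨rfl, rfl⟩, hQ⟩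
      · rintro ⟨i', α', Q, rfl, ⟨he, rfl⟩, hQ⟩
        obtain ⟨rfl, rfl, -⟩ := edge_injective he
        exact ⟨rfl, Q, rfl, hQ⟩
    · rw [src_edge_succ]
      refine iff_of_false (fun h => mainVertex_ne_innerVertex h.1.symm) ?_
      rintro ⟨i', α', Q, -, ⟨he, -⟩, -⟩
      simpa using (edge_injective he).2.2

theorem exists_isPath_labelSet_iff (v : Fin (n + 1)) (S : Finset (Fin m)) :
    (∃ P, (cnfGraph n m D).IsPath (mainVertex D v) (mainVertex D (Fin.last n)) P ∧
      (cnfGraph n m D).labelSet P = S) ↔ ∃ β, S = satisfiedFrom D β v := by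
  induction v using Fin.reverseInduction generalizing S with
  | last =>
    simp only [satisfiedFrom_last, exists_const]
    constructor
    · rintro ⟨P, hP, rfl⟩
      obtain ⟨rfl, -⟩ | ⟨i, -, -, h, -⟩ := isPath_mainVertex_iff.1 hP
      · rfl
      · exact absurd h (Fin.castSucc_ne_last i)
    · rintro rfl
      exact ⟨[], rfl, rfl⟩
  | cast i ih =>
    constructor
    · rintro ⟨P, hP, rfl⟩
      obtain ⟨-, h⟩ | ⟨i', α, Q, hi, rfl, hQ⟩ := isPath_mainVertex_iff.1 hP
      · exact absurd h (Fin.castSucc_ne_last i)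
      obtain rfl := Fin.castSucc_injective _ hi
      obtain ⟨β, hβ⟩ := (ih _).1 ⟨Q, hQ, rfl⟩
      refine ⟨Function.update β i' α, ?_⟩
      rw [satisfiedFrom_castSucc, Function.update_self, satisfiedFrom_update_succ,
        labelSet_append, labelSet_pathEdges, hβ]
    · rintro ⟨β, rfl⟩
      obtain ⟨Q, hQ, hQS⟩ := (ih _).2 ⟨β, rfl⟩
      refine ⟨pathEdges D i (β i) ++ Q, isPath_mainVertex_iff.2 (Or.inr ⟨i, β i, Q, rfl, rfl, hQ⟩),
        ?_⟩
      rw [labelSet_append, labelSet_pathEdges, hQS, satisfiedFrom_castSucc]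

theorem labelFamily_eq : (cnfGraph n m D).labelFamily = {S | ∃ β, S = satisfiedFrom D β 0} := by
  ext S
  simp only [labelFamily, isSTPath_iff_isPath]
  exact exists_isPath_labelSet_iff 0 S

end cnfGraph

theorem stmt7 {n m : ℕ} (D : Fin m → Finset (Fin n × Bool)) :
    (cnfGraph n m D).labelFamily =
      {S : Finset (Fin m) | ∃ β : Fin n → Bool,
        S = Finset.univ.biUnion (fun i => clauseSets D i (β i))} ∧
    ((∃ β : Fin n → Bool, ∀ j : Fin m, ∃ l ∈ D j, β l.1 = l.2) ↔
      (Finset.univ : Finset (Fin m)) ∈ (cnfGraph n m D).labelFamily) := by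
  have hfamily : (cnfGraph n m D).labelFamily =
      {S | ∃ β : Fin n → Bool, S = Finset.univ.biUnion (fun i => clauseSets D i (β i))} := by
    simp only [cnfGraph.labelFamily_eq, satisfiedFrom_zero]
  refine ⟨hfamily, ?_⟩
  simp only [hfamily, Set.mem_ofPred_eq, eq_comm (a := Finset.univ), biUnion_clauseSets_eq_univ_iff]
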